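/- arXiv:2012.07691 — 2 statements merged into one kernel-verified Lean document; each statement's English description precedes it below -/
import Mathlib

section
/- Every causal LTI operator with absolutely summable impulse response has fading memory: if g ∈ ℓ¹(ℕ) and (Fu)_k = Σ_{m=0}^{k} g_{k−m} u_m, then F has fading memory on 𝒰_β for every β > 0, for some decreasing weight sequence w : ℕ → (0,1] tending to 0. -/
def InU (β : ℝ) (u : ℕ → ℝ) : Prop := ∃ b, b < β ∧ ∀ k, |u k| ≤ b

def FadingMemory (β : ℝ) (w : ℕ → ℝ) (F : (ℕ → ℝ) → (ℕ → ℝ)) : Prop :=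
  ∀ ε > 0, ∃ δ > 0, ∀ u u2 : ℕ → ℝ, InU β u → InU β u2 → ∀ k : ℕ,
    (∀ m ≤ k, |u m - u2 m| * w (k - m) < δ) → |F u k - F u2 k| < ε

/-- The causal convolution operator with impulse response `g`. -/
noncomputable def convOp (g : ℕ → ℝ) (u : ℕ → ℝ) (k : ℕ) : ℝ :=
  ∑ m ∈ Finset.range (k + 1), g (k - m) * u m

/-!
Weight the past geometrically, `w k = 2⁻ᵏ`. Split `(g * (u - ũ))_k` into the lags `j < N` and
the lags `j ≥ N`. On the recent lags the weight is at least `w N`, so the fading-memory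
hypothesis makes `|u - ũ|` uniformly small there; on the old lags `|u - ũ| < 2β`, and
`∑_{j ≥ N} |g j|` is small for `N` large since `g ∈ ℓ¹`.
-/

open Finset

theorem Summable.exists_forall_sum_tail_lt {f : ℕ → ℝ} (hf : Summable f) {ε : ℝ} (hε : 0 < ε) :
    ∃ N, ∀ t : Finset ℕ, (∀ j ∈ t, N ≤ j) → ∑ j ∈ t, f j < ε := by
  obtain ⟨s, hs⟩ := summable_iff_vanishing_norm.1 hf ε hε
  obtain ⟨N, hsN⟩ := s.exists_nat_subset_range
  refine ⟨N, fun t ht => (Real.le_norm_self _).trans_lt (hs t ?_)⟩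
  exact disjoint_left.2 fun j hjt hjs => (ht j hjt).not_gt (mem_range.1 (hsN hjs))

theorem InU.abs_sub_lt {β : ℝ} {u v : ℕ → ℝ} (hu : InU β u) (hv : InU β v) (m : ℕ) :
    |u m - v m| < 2 * β := by
  obtain ⟨b, hbβ, hb⟩ := hu
  obtain ⟨c, hcβ, hc⟩ := hv
  calc |u m - v m| ≤ |u m| + |v m| := abs_sub _ _
    _ ≤ b + c := add_le_add (hb m) (hc m)
    _ < 2 * β := by linarith

section convOp

variable (g : ℕ → ℝ)

theorem convOp_sub (u v : ℕ → ℝ) (k : ℕ) :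
    convOp g u k - convOp g v k = convOp g (u - v) k := by
  simp only [convOp, Pi.sub_apply, mul_sub, sum_sub_distrib]

theorem convOp_eq_sum_lag (u : ℕ → ℝ) (k : ℕ) :
    convOp g u k = ∑ j ∈ range (k + 1), g j * u (k - j) := by
  rw [convOp, ← sum_range_reflect]
  refine sum_congr rfl fun j hj => ?_
  have hjk : j ≤ k := Nat.lt_succ_iff.1 (mem_range.1 hj)
  rw [Nat.add_sub_cancel, Nat.sub_sub_self hjk]

theorem abs_convOp_le {d : ℕ → ℝ} {k N : ℕ} {η A : ℝ}
    (hrecent : ∀ j ≤ k, j < N → |d (k - j)| ≤ η) (hold : ∀ m, |d m| ≤ A) :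
    |convOp g d k| ≤ η * ∑ j ∈ (range (k + 1)).filter (· < N), |g j|
      + A * ∑ j ∈ (range (k + 1)).filter (N ≤ ·), |g j| := by
  rw [convOp_eq_sum_lag, mul_sum, mul_sum]
  calc |∑ j ∈ range (k + 1), g j * d (k - j)|
      ≤ ∑ j ∈ range (k + 1), |g j| * |d (k - j)| := by
        simpa only [abs_mul] using abs_sum_le_sum_abs (fun j => g j * d (k - j)) (range (k + 1))
    _ = ∑ j ∈ (range (k + 1)).filter (· < N), |g j| * |d (k - j)|
          + ∑ j ∈ (range (k + 1)).filter (N ≤ ·), |g j| * |d (k - j)| := by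
        simp only [← not_lt]
        exact (sum_filter_add_sum_filter_not _ _ _).symm
    _ ≤ _ := by
        refine add_le_add (sum_le_sum fun j hj => ?_) (sum_le_sum fun j _ => ?_)
        · rw [mem_filter, mem_range] at hj
          rw [mul_comm η]
          exact mul_le_mul_of_nonneg_left (hrecent j (by omega) hj.2) (abs_nonneg _)
        · rw [mul_comm A]
          exact mul_le_mul_of_nonneg_left (hold _) (abs_nonneg _)

theorem fadingMemory_convOp (hg : Summable fun j => |g j|) {β : ℝ} (hβ : 0 < β)
    {w : ℕ → ℝ} (hw_pos : ∀ k, 0 < w k) (hw_anti : Antitone w) :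
    FadingMemory β w (convOp g) := by
  intro ε hε
  set S := ∑' j, |g j|
  have hS : 0 ≤ S := tsum_nonneg fun _ => abs_nonneg _
  obtain ⟨N, hN⟩ := hg.exists_forall_sum_tail_lt (show 0 < ε / (4 * β) by positivity)
  set η := ε / (2 * (S + 1))
  refine ⟨η * w N, mul_pos (by positivity) (hw_pos N), fun u v hu hv k hclose => ?_⟩
  have hrecent : ∀ j ≤ k, j < N → |(u - v) (k - j)| ≤ η := by
    intro j hjk hjN
    have hw : w N ≤ w (k - (k - j)) := hw_anti (by omega)
    refine (lt_of_mul_lt_mul_right ?_ (hw_pos N).le).le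
    calc |(u - v) (k - j)| * w N ≤ |u (k - j) - v (k - j)| * w (k - (k - j)) := by
          rw [Pi.sub_apply]; gcongr
      _ < η * w N := hclose _ (Nat.sub_le _ _)
  have hold : ∀ m, |(u - v) m| ≤ 2 * β := fun m => (hu.abs_sub_lt hv m).le
  have hS_recent : ∑ j ∈ (range (k + 1)).filter (· < N), |g j| ≤ S :=
    hg.sum_le_tsum _ fun _ _ => abs_nonneg _
  have hS_old : ∑ j ∈ (range (k + 1)).filter (N ≤ ·), |g j| < ε / (4 * β) :=
    hN _ fun j hj => (mem_filter.1 hj).2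
  have hηS : η * S < ε / 2 := by
    rw [div_mul_eq_mul_div, div_lt_div_iff₀ (by positivity) two_pos]
    nlinarith
  rw [convOp_sub]
  calc |convOp g (u - v) k|
      ≤ η * ∑ j ∈ (range (k + 1)).filter (· < N), |g j|
          + 2 * β * ∑ j ∈ (range (k + 1)).filter (N ≤ ·), |g j| :=
        abs_convOp_le g hrecent hold
    _ < ε / 2 + 2 * β * (ε / (4 * β)) := by
        gcongr
        exact (mul_le_mul_of_nonneg_left hS_recent (by positivity)).trans_lt hηS
    _ = ε := by field_simp; ring

end convOp

/-- Every causal LTI operator with absolutely summable impulse response has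
fading memory on `𝒰_β` for every `β > 0`. -/
theorem conv_has_fading_memory
    (g : ℕ → ℝ) (hg : Summable fun k => |g k|) :
    ∀ β > 0, ∃ w : ℕ → ℝ,
      (∀ k, 0 < w k) ∧ (∀ k, w k ≤ 1) ∧ Antitone w ∧
      Filter.Tendsto w Filter.atTop (nhds 0) ∧
      FadingMemory β w (convOp g) := by
  intro β hβ
  have hw_pos : ∀ k, 0 < (1 / 2 : ℝ) ^ k := fun k => by positivity
  have hw_anti : Antitone fun k => (1 / 2 : ℝ) ^ k :=
    fun _ _ hab => pow_le_pow_of_le_one (by norm_num) (by norm_num) hab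
  exact ⟨fun k => (1 / 2 : ℝ) ^ k, hw_pos, fun k => pow_le_one₀ (by norm_num) (by norm_num),
    hw_anti, tendsto_pow_atTop_nhds_zero_of_lt_one (by norm_num) (by norm_num),
    fadingMemory_convOp g hg hβ hw_pos hw_anti⟩
end

section
/- Uniform approximation transfers across feedback over finite horizons: suppose v, v̂ : ℕ → ℝ satisfy v_{k+1} = v_k + (t_s/c)(−y_k + i_k) and v̂_{k+1} = v̂_k + (t_s/c)(−ŷ_k + i_k) with v₀ = v̂₀, where |ŷ_k − y_k| ≤ ε + L·max_{m ≤ k} |v̂_m − v_m| for constants ε ≥ 0, L ≥ 0. Then for all k ≤ N, |v̂_k − v_k| ≤ (t_s/c)·ε·((1 + (t_s/c)L)^k − 1)/((t_s/c)L) when L > 0 (and ≤ k (t_s/c) ε when L = 0). -/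
/-!
Write `h = ts / c` and let `M k = max_{m ≤ k} |v̂ m - v m|`. One Euler step gives
`|v̂ (k+1) - v (k+1)| ≤ |v̂ k - v k| + h |ŷ k - y k| ≤ (1 + h L) M k + h ε`, and since `M k ≥ 0`
the same bound holds for `M (k+1)`. The discrete Grönwall inequality with `M 0 = 0` then bounds
`M k` by `h ε ∑_{i<k} (1 + h L)^i`, a geometric sum that is `k` when `L = 0`.
-/

open Finset

theorem discrete_gronwall_const {R : Type*} [CommSemiring R] [PartialOrder R] [IsOrderedRing R]
    {u : ℕ → R} {a b : R} (ha : 0 ≤ a) (hu : ∀ n, u (n + 1) ≤ a * u n + b) (n : ℕ) :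
    u n ≤ u 0 * a ^ n + b * ∑ i ∈ range n, a ^ i := by
  have h := discrete_gronwall_prod_general (c := fun _ => a) (b := fun _ => b)
    (fun n _ => hu n) (fun _ _ => ha) (Nat.zero_le n)
  simp only [prod_const, Nat.card_Ico, Nat.Ico_zero_eq_range, card_range, ← mul_sum] at h
  rwa [← sum_range_reflect, sum_congr rfl fun k hk => by
    rw [show n - (n - 1 - k + 1) = k by have := mem_range.mp hk; omega]] at h

def runningMax {α : Type*} [LinearOrder α] (e : ℕ → α) (k : ℕ) : α :=
  (range (k + 1)).sup' (nonempty_range_iff.mpr (Nat.succ_ne_zero k)) e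

namespace runningMax

variable {α : Type*} [LinearOrder α] {e : ℕ → α}

theorem le_of_le {m k : ℕ} (hmk : m ≤ k) : e m ≤ runningMax e k :=
  le_sup' e (mem_range.mpr (Nat.lt_succ_of_le hmk))

@[simp]
theorem zero : runningMax e 0 = e 0 := by
  simp [runningMax]

theorem succ_le_iff {k : ℕ} {x : α} :
    runningMax e (k + 1) ≤ x ↔ runningMax e k ≤ x ∧ e (k + 1) ≤ x := by
  simp only [runningMax, sup'_le_iff, mem_range]
  constructor
  · intro h
    exact ⟨fun m hm => h m (by omega), h _ (by omega)⟩
  · rintro ⟨h, hk⟩ m hm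
    rcases Nat.lt_succ_iff_lt_or_eq.mp hm with hm | rfl
    exacts [h m hm, hk]

end runningMax

theorem abs_sub_succ_le_of_euler_step {i y yhat v vhat : ℕ → ℝ} {h : ℝ} (hh : 0 ≤ h) (k : ℕ)
    (hv : v (k + 1) = v k + h * (-(y k) + i k))
    (hvhat : vhat (k + 1) = vhat k + h * (-(yhat k) + i k)) :
    |vhat (k + 1) - v (k + 1)| ≤ |vhat k - v k| + h * |yhat k - y k| :=
  calc |vhat (k + 1) - v (k + 1)| = |(vhat k - v k) - h * (yhat k - y k)| := by
        rw [hv, hvhat]; ring_nf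
    _ ≤ |vhat k - v k| + |h * (yhat k - y k)| := abs_sub _ _
    _ = |vhat k - v k| + h * |yhat k - y k| := by rw [abs_mul, abs_of_nonneg hh]

theorem abs_sub_le_geom_sum_of_euler_step {i y yhat v vhat : ℕ → ℝ} {h ε L : ℝ}
    (hh : 0 ≤ h) (hε : 0 ≤ ε) (hL : 0 ≤ L) (h0 : v 0 = vhat 0)
    (hv : ∀ k, v (k + 1) = v k + h * (-(y k) + i k))
    (hvhat : ∀ k, vhat (k + 1) = vhat k + h * (-(yhat k) + i k))
    (herr : ∀ k, |yhat k - y k| ≤ ε + L * runningMax (fun m => |vhat m - v m|) k) (k : ℕ) :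
    |vhat k - v k| ≤ h * ε * ∑ j ∈ range k, (1 + h * L) ^ j := by
  set M := runningMax fun m => |vhat m - v m|
  have hle_M : ∀ k, |vhat k - v k| ≤ M k := fun k =>
    runningMax.le_of_le (e := fun m => |vhat m - v m|) le_rfl
  have hM_nonneg : ∀ k, 0 ≤ M k := fun k => (abs_nonneg _).trans (hle_M k)
  have hstep : ∀ k, M (k + 1) ≤ (1 + h * L) * M k + h * ε := fun k => by
    refine runningMax.succ_le_iff.mpr ⟨?_, ?_⟩
    · have hq : 1 ≤ 1 + h * L := le_add_of_nonneg_right (mul_nonneg hh hL)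
      exact le_add_of_le_of_nonneg (le_mul_of_one_le_left (hM_nonneg k) hq) (mul_nonneg hh hε)
    calc |vhat (k + 1) - v (k + 1)| ≤ |vhat k - v k| + h * |yhat k - y k| :=
          abs_sub_succ_le_of_euler_step hh k (hv k) (hvhat k)
      _ ≤ M k + h * (ε + L * M k) := by
          gcongr
          exacts [hle_M k, herr k]
      _ = (1 + h * L) * M k + h * ε := by ring
  calc |vhat k - v k| ≤ M k := hle_M k
    _ ≤ M 0 * (1 + h * L) ^ k + h * ε * ∑ j ∈ range k, (1 + h * L) ^ j :=
        discrete_gronwall_const (by positivity) hstep k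
    _ = h * ε * ∑ j ∈ range k, (1 + h * L) ^ j := by simp [M, h0]

/-- Discrete Grönwall-type bound: uniform approximation of the feedback
operator transfers to a closed-loop simulation-error bound over finite
horizons. -/
theorem closed_loop_simulation_error_bound
    (c ts ε L : ℝ) (hc : 0 < c) (hts : 0 < ts) (hε : 0 ≤ ε) (hL : 0 ≤ L)
    (N : ℕ) (i y yhat v vhat : ℕ → ℝ)
    (h0 : v 0 = vhat 0)
    (hv : ∀ k, v (k + 1) = v k + (ts / c) * (-(y k) + i k))
    (hvhat : ∀ k, vhat (k + 1) = vhat k + (ts / c) * (-(yhat k) + i k))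
    (herr : ∀ k, |yhat k - y k| ≤ ε + L *
      (Finset.range (k + 1)).sup' (Finset.nonempty_range_iff.mpr (Nat.succ_ne_zero k))
        (fun m => |vhat m - v m|)) :
    ∀ k ≤ N,
      (0 < L → |vhat k - v k| ≤
        (ts / c) * ε * ((1 + (ts / c) * L) ^ k - 1) / ((ts / c) * L)) ∧
      (L = 0 → |vhat k - v k| ≤ (k : ℝ) * (ts / c) * ε) := by
  have hh : 0 < ts / c := div_pos hts hc
  intro k _
  have hbound := abs_sub_le_geom_sum_of_euler_step hh.le hε hL h0 hv hvhat herr k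
  refine ⟨fun hL_pos => ?_, fun hL_zero => ?_⟩
  · have hq : 1 + ts / c * L ≠ 1 := by simpa using (mul_pos hh hL_pos).ne'
    rwa [geom_sum_eq hq, add_sub_cancel_left, ← mul_div_assoc] at hbound
  · simp only [hL_zero, mul_zero, add_zero, one_pow, sum_const, card_range, nsmul_eq_mul,
      mul_one] at hbound
    linarith
end
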